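/- arXiv:1712.07161 — 3 statements merged into one kernel-verified Lean document; each statement's English description precedes it below -/
import Mathlib

section
/- Let H be a binary (n−k)×n parity-check matrix such that every set of 2L columns of H is linearly independent over GF(2). Interpreting entries of H as complex numbers, the linear map q ↦ Hq from ℂⁿ to ℂ^{n−k} is injective on the set of vectors with at most L nonzero entries: if q₁ and q₂ each have at most L nonzero components and Hq₁ = Hq₂, then q₁ = q₂. -/
/-!
Over `GF(2)` a matrix `A` with independent columns has a left inverse `B`. Lifting `A` and `B` to
integer matrices, `det (B A) ≡ 1 (mod 2)`, so this determinant is a nonzero integer and the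
complex lift of `A` still has a left inverse: its columns stay independent over `ℂ`. Two `L`-sparse
vectors with the same image differ by a `2L`-sparse vector in the kernel of the columns on its
support, which are independent.
-/

open Function

namespace Matrix

variable {m n ι : Type*}

section Lift

variable [Fintype m] [Fintype ι] [DecidableEq ι]

theorem exists_mul_eq_one_of_mulVec_injective {K : Type*} [Field K] {A : Matrix m ι K}
    (hA : Injective A.mulVec) : ∃ B : Matrix ι m K, B * A = 1 := by
  classical
  obtain ⟨g, hg⟩ :=
    A.mulVecLin.exists_leftInverse_of_injective (LinearMap.ker_eq_bot.mpr hA)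
  refine ⟨LinearMap.toMatrix' g, ?_⟩
  simpa [LinearMap.toMatrix'_comp, ← Matrix.toLin'_apply'] using congrArg LinearMap.toMatrix' hg

omit [Fintype ι] [DecidableEq ι] in
theorem map_intCast_mul {l S : Type*} [Ring S] (M : Matrix l m ℤ) (N : Matrix m ι ℤ) :
    (M * N).map (Int.cast : ℤ → S) = M.map (Int.cast : ℤ → S) * N.map (Int.cast : ℤ → S) :=
  Matrix.map_mul (f := Int.castRingHom S)

theorem mulVec_injective_map_intCast {R : Type*} [CommRing R] [NoZeroDivisors R] [CharZero R]
    {p : ℕ} [Fact p.Prime] {A : Matrix m ι ℤ}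
    (hA : Injective (A.map (Int.cast : ℤ → ZMod p)).mulVec) :
    Injective (A.map (Int.cast : ℤ → R)).mulVec := by
  obtain ⟨B, hB⟩ := exists_mul_eq_one_of_mulVec_injective hA
  set BZ : Matrix ι m ℤ := B.map fun x => (x.cast : ℤ)
  have hBZ : BZ.map (Int.cast : ℤ → ZMod p) = B := by
    ext; simp [BZ]
  have hdet : (BZ * A).det ≠ 0 := by
    intro h
    have : ((BZ * A).det : ZMod p) = 1 := by
      rw [Int.cast_det, map_intCast_mul, hBZ, hB, det_one]
    simp [h] at this
  have hprod : Injective (BZ.map (Int.cast : ℤ → R) * A.map (Int.cast : ℤ → R)).mulVec := by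
    refine mulVec_injective_of_det_ne_zero ?_
    rw [← map_intCast_mul, ← Int.cast_det]
    exact_mod_cast hdet
  refine Injective.of_comp (f := (BZ.map (Int.cast : ℤ → R)).mulVec) ?_
  simpa only [comp_def, mulVec_mulVec] using hprod

theorem mulVec_injective_map_val {R : Type*} [CommRing R] [NoZeroDivisors R] [CharZero R]
    {p : ℕ} [Fact p.Prime] {A : Matrix m ι (ZMod p)} (hA : Injective A.mulVec) :
    Injective (A.map fun x => (x.val : R)).mulVec := by
  have hlift : (A.map fun x => (x.val : ℤ)).map (Int.cast : ℤ → ZMod p) = A := by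
    ext; simp
  have hcast :
      (A.map fun x => (x.val : ℤ)).map (Int.cast : ℤ → R) = A.map fun x => (x.val : R) := by
    ext; simp
  exact hcast ▸ mulVec_injective_map_intCast (hlift ▸ hA)

end Lift

section Sparse

variable {R : Type*} [Ring R] [Fintype n] (M : Matrix m n R)

theorem submatrix_val_mulVec_of_support_subset {s : Finset n} {v : n → R}
    (hv : ∀ i ∉ s, v i = 0) :
    M.submatrix id ((↑) : s → n) *ᵥ (fun j => v j) = M *ᵥ v := by
  ext i
  simp only [mulVec, dotProduct, submatrix_apply, id]
  rw [Finset.sum_coe_sort s (fun j => M i j * v j)]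
  exact Finset.sum_subset (Finset.subset_univ s) fun j _ hj => by simp [hv j hj]

theorem eq_of_mulVec_eq_of_ncard_support_le {k : ℕ}
    (hM : ∀ s : Finset n, s.card ≤ k → Injective (M.submatrix id ((↑) : s → n)).mulVec)
    {v w : n → R} (hvw : {i | v i ≠ 0}.ncard + {i | w i ≠ 0}.ncard ≤ k)
    (h : M *ᵥ v = M *ᵥ w) : v = w := by
  classical
  set s := Finset.univ.filter fun i => v i ≠ w i
  have hs : s.card ≤ k := by
    have hsub : (s : Set n) ⊆ {i | v i ≠ 0} ∪ {i | w i ≠ 0} := by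
      intro i hi
      by_contra hi'
      simp_all [s]
    calc s.card = (s : Set n).ncard := (Set.ncard_coe_finset s).symm
      _ ≤ ({i | v i ≠ 0} ∪ {i | w i ≠ 0}).ncard := Set.ncard_le_ncard hsub
      _ ≤ k := (Set.ncard_union_le _ _).trans hvw
  have hsupp : ∀ i ∉ s, (v - w) i = 0 := fun i hi => by simpa [s, sub_eq_zero] using hi
  have hzero : (fun j : s => (v - w) j) = 0 := hM s hs <| by
    rw [submatrix_val_mulVec_of_support_subset M hsupp, mulVec_sub, h, sub_self, mulVec_zero]
  funext i
  by_cases hi : i ∈ s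
  · exact sub_eq_zero.mp (congrFun hzero ⟨i, hi⟩)
  · exact sub_eq_zero.mp (hsupp i hi)

end Sparse

end Matrix

/-- If every set of at most `2L` columns of the `{0,1}`-matrix `H` is linearly independent
over `GF(2)`, then the complex map `q ↦ Hq` is injective on `L`-sparse complex vectors. -/
theorem stmt6 (m n L : ℕ) (H : Matrix (Fin m) (Fin n) (ZMod 2))
    (hcols : ∀ s : Finset (Fin n), s.card ≤ 2 * L →
      LinearIndependent (ZMod 2) (fun j : {x // x ∈ s} => fun i => H i j.1))
    (q₁ q₂ : Fin n → ℂ)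
    (h₁ : {i | q₁ i ≠ 0}.ncard ≤ L) (h₂ : {i | q₂ i ≠ 0}.ncard ≤ L)
    (heq : (H.map (fun x => (x.val : ℂ))).mulVec q₁ =
           (H.map (fun x => (x.val : ℂ))).mulVec q₂) :
    q₁ = q₂ := by
  refine (H.map fun x => (x.val : ℂ)).eq_of_mulVec_eq_of_ncard_support_le
    (k := 2 * L) (fun s hs => ?_) (by omega) heq
  exact Matrix.mulVec_injective_map_val (Matrix.mulVec_injective_iff.mpr (hcols s hs))
end

section
/- Let H be a {0,1}-matrix of size m×n such that every set of L columns of H is linearly independent over GF(2). Then, viewing H over ℂ, for any vector q ∈ ℂⁿ with at most L nonzero entries, Hq = 0 implies q = 0. -/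
/-!
Lift the entries of `H` to `ℤ` and restrict to the columns in the support `s` of `q`. Since these
columns are independent over `GF(2)`, some `|s| × |s|` minor has nonzero determinant mod 2. That
determinant is an integer, hence nonzero, hence nonzero in `ℂ`; so the same columns are
independent over `ℂ`, and `Hq = 0` forces `q` to vanish on `s`.
-/

open Matrix Module

theorem Matrix.exists_isUnit_submatrix_of_linearIndependent_col {K m ι : Type*} [Field K]
    [Finite m] [Fintype ι] [DecidableEq ι] {B : Matrix m ι K} (hB : LinearIndependent K B.col) :
    ∃ r : ι → m, IsUnit (B.submatrix r id) := by
  have hrank : finrank K (Submodule.span K (Set.range B.row)) = Fintype.card ι := by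
    rw [← rank_eq_finrank_span_row, rank_eq_finrank_span_cols]
    exact (linearIndependent_iff_card_eq_finrank_span.mp hB).symm
  have hspan : Submodule.span K (Set.range B.row) = ⊤ :=
    Submodule.eq_top_of_finrank_eq (by rw [hrank, finrank_fintype_fun_eq_card])
  obtain ⟨κ, a, -, hspan', hli⟩ := exists_linearIndependent' K B.row
  let b : Basis κ K (ι → K) := Basis.mk hli (by rw [hspan', hspan])
  have : Finite κ := Module.Finite.finite_basis b
  obtain ⟨e⟩ : Nonempty (ι ≃ κ) := by
    rw [← Finite.card_eq, ← finrank_eq_nat_card_basis b, Nat.card_eq_fintype_card,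
      finrank_fintype_fun_eq_card]
  exact ⟨a ∘ e, linearIndependent_rows_iff_isUnit.mp (hli.comp e e.injective)⟩

theorem Matrix.linearIndependent_col_of_submatrix {R m m' n : Type*} [CommRing R]
    {A : Matrix m n R} (r : m' → m) (h : LinearIndependent R (A.submatrix r id).col) :
    LinearIndependent R A.col :=
  LinearIndependent.of_comp (LinearMap.funLeft R R r) h

theorem Matrix.linearIndependent_col_map_intCast_of_reduction {F K m ι : Type*}
    [Field F] [Field K] [CharZero K] [Finite m] [Fintype ι] [DecidableEq ι] {A : Matrix m ι ℤ}
    (h : LinearIndependent F (A.map ((↑) : ℤ → F)).col) :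
    LinearIndependent K (A.map ((↑) : ℤ → K)).col := by
  obtain ⟨r, hr⟩ := exists_isUnit_submatrix_of_linearIndependent_col h
  have hdet : (A.submatrix r id).det ≠ 0 := by
    rintro h0
    rw [isUnit_iff_isUnit_det, submatrix_map, ← Int.cast_det, h0, Int.cast_zero] at hr
    exact not_isUnit_zero hr
  refine linearIndependent_col_of_submatrix r (linearIndependent_cols_iff_isUnit.mpr ?_)
  rw [isUnit_iff_isUnit_det, submatrix_map, ← Int.cast_det]
  exact (Int.cast_ne_zero.mpr hdet).isUnit

theorem Matrix.eq_zero_of_mulVec_eq_zero_of_linearIndependent_col {R m n : Type*} [CommRing R]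
    [Fintype n] {M : Matrix m n R} {s : Finset n}
    (hs : LinearIndependent R (M.submatrix id ((↑) : s → n)).col) {q : n → R}
    (hq : ∀ j ∉ s, q j = 0) (h : M *ᵥ q = 0) : q = 0 := by
  have hsub : M.submatrix id ((↑) : s → n) *ᵥ (fun j : s => q j) = M *ᵥ q := by
    ext i
    simp only [mulVec, dotProduct, submatrix_apply, id]
    rw [Finset.sum_coe_sort s (fun j => M i j * q j)]
    exact Finset.sum_subset (Finset.subset_univ s) (fun j _ hj => by simp [hq j hj])
  have hrestr : (fun j : s => q j) = 0 :=
    mulVec_injective_iff.mpr hs (by rw [hsub, h, mulVec_zero])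
  funext j
  by_cases hj : j ∈ s
  · exact congrFun hrestr ⟨j, hj⟩
  · exact hq j hj

/-- If every set of at most `L` columns of the `{0,1}`-matrix `H` is linearly independent
over `GF(2)`, then for any `L`-sparse complex vector `q`, `Hq = 0` (over `ℂ`) implies
`q = 0`. -/
theorem stmt7 (m n L : ℕ) (H : Matrix (Fin m) (Fin n) (ZMod 2))
    (hcols : ∀ s : Finset (Fin n), s.card ≤ L →
      LinearIndependent (ZMod 2) (fun j : {x // x ∈ s} => fun i => H i j.1))
    (q : Fin n → ℂ) (hq : {i | q i ≠ 0}.ncard ≤ L)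
    (h0 : (H.map (fun x => (x.val : ℂ))).mulVec q = 0) :
    q = 0 := by
  classical
  set s := {i | q i ≠ 0}.toFinset
  have hs : s.card ≤ L := by rwa [Set.ncard_eq_toFinset_card'] at hq
  let A : Matrix (Fin m) s ℤ := (H.map (fun x => (x.val : ℤ))).submatrix id (↑)
  have hA₂ : A.map ((↑) : ℤ → ZMod 2) = H.submatrix id ((↑) : s → Fin n) := by
    ext i j
    simp [A]
  have hAℂ :
      A.map ((↑) : ℤ → ℂ) = (H.map (fun x => (x.val : ℂ))).submatrix id (↑) := by
    ext i j
    simp [A]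
  have hli₂ : LinearIndependent (ZMod 2) (A.map ((↑) : ℤ → ZMod 2)).col := by
    rw [hA₂]
    exact hcols s hs
  have hliℂ := linearIndependent_col_map_intCast_of_reduction (K := ℂ) hli₂
  rw [hAℂ] at hliℂ
  refine eq_zero_of_mulVec_eq_zero_of_linearIndependent_col hliℂ (fun j hj => ?_) h0
  simpa [s] using hj
end

section
/- Let H be an m×n matrix over GF(2) whose columns are pairwise distinct and all nonzero. Then, interpreting entries of H as complex numbers, the map q ↦ Hq is injective on the set of complex vectors with at most one nonzero entry. -/
/-!
A `1`-sparse vector is `Pi.single j c`, and `M *ᵥ Pi.single j c` is column `j` scaled by `c`.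
Over `GF(2)` the columns are `0`/`1`-vectors. If two distinct columns give the same image, a row
where they differ has a `0` in one column and a `1` in the other, which forces one scalar to
vanish; a row where the other (nonzero) column has a `1` then forces the second scalar to vanish
too. For equal columns, such a row gives `c₁ = c₂` directly.
-/

lemma Function.exists_eq_single_of_ncard_support_le_one {ι M : Type*} [DecidableEq ι] [Finite ι]
    [Nonempty ι] [Zero M] {q : ι → M} (h : (Function.support q).ncard ≤ 1) :
    ∃ j c, q = Pi.single j c := by
  obtain ⟨j, hj⟩ := (Set.ncard_le_one_iff_subset_singleton).mp h
  refine ⟨j, q j, funext fun k => ?_⟩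
  by_cases hk : k = j
  · subst hk
    simp
  · rw [Pi.single_eq_of_ne hk]
    exact Function.notMem_support.mp fun hq => hk (hj hq)

section ZeroOne

variable {m R : Type*} [MulZeroOneClass R] {u v : m → R}

lemma exists_eq_one_of_zero_one (hu01 : ∀ i, u i = 0 ∨ u i = 1) (hu : u ≠ 0) : ∃ i, u i = 1 := by
  obtain ⟨i, hi⟩ := Function.ne_iff.mp hu
  exact ⟨i, (hu01 i).resolve_left hi⟩

lemma eq_zero_of_forall_mul_eq_zero_of_zero_one (hu01 : ∀ i, u i = 0 ∨ u i = 1) (hu : u ≠ 0)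
    {a : R} (h : ∀ i, u i * a = 0) : a = 0 := by
  obtain ⟨i, hi⟩ := exists_eq_one_of_zero_one hu01 hu
  simpa [hi] using h i

lemma eq_zero_of_mul_eq_mul_of_zero_one (hu01 : ∀ i, u i = 0 ∨ u i = 1)
    (hv01 : ∀ i, v i = 0 ∨ v i = 1) (hu : u ≠ 0) (hv : v ≠ 0) (huv : u ≠ v) {a b : R}
    (h : ∀ i, u i * a = v i * b) : a = 0 ∧ b = 0 := by
  obtain ⟨i, hi⟩ := Function.ne_iff.mp huv
  have hab : a = 0 ∨ b = 0 := by
    have hi' := h i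
    rcases hu01 i with hui | hui <;> rcases hv01 i with hvi | hvi <;> rw [hui, hvi] at hi hi'
    · exact absurd rfl hi
    · exact Or.inr (by simpa using hi'.symm)
    · exact Or.inl (by simpa using hi')
    · exact absurd rfl hi
  rcases hab with rfl | rfl
  · exact ⟨rfl, eq_zero_of_forall_mul_eq_zero_of_zero_one hv01 hv fun i => by simp [← h i]⟩
  · exact ⟨eq_zero_of_forall_mul_eq_zero_of_zero_one hu01 hu fun i => by simp [h i], rfl⟩

end ZeroOne

namespace Matrix

theorem single_eq_single_of_mulVec_eq_of_zero_one {m n R : Type*} [Fintype n]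
    [DecidableEq n] [NonAssocSemiring R] {M : Matrix m n R} (h01 : ∀ i j, M i j = 0 ∨ M i j = 1)
    (hinj : Function.Injective Mᵀ) (hnz : ∀ j, Mᵀ j ≠ 0) {j₁ j₂ : n} {c₁ c₂ : R}
    (h : M *ᵥ Pi.single j₁ c₁ = M *ᵥ Pi.single j₂ c₂) :
    (Pi.single j₁ c₁ : n → R) = Pi.single j₂ c₂ := by
  have hcol : ∀ i, M i j₁ * c₁ = M i j₂ * c₂ := fun i => by
    simpa using congrFun h i
  by_cases hj : j₁ = j₂
  · subst hj
    obtain ⟨i, hi⟩ := exists_eq_one_of_zero_one (h01 · j₁) (hnz j₁)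
    simpa [hi] using hcol i
  · obtain ⟨rfl, rfl⟩ := eq_zero_of_mul_eq_mul_of_zero_one (h01 · j₁) (h01 · j₂) (hnz j₁)
      (hnz j₂) (hinj.ne hj) hcol
    simp

end Matrix

/-- If the columns of a `GF(2)` matrix `H` are pairwise distinct and nonzero, then,
interpreting entries as complex numbers, `q ↦ Hq` is injective on `1`-sparse complex
vectors. -/
theorem stmt10 (m n : ℕ) (H : Matrix (Fin m) (Fin n) (ZMod 2))
    (hinj : Function.Injective (fun j : Fin n => fun i => H i j))
    (hnz : ∀ j : Fin n, (fun i => H i j) ≠ 0)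
    (q₁ q₂ : Fin n → ℂ)
    (h₁ : {i | q₁ i ≠ 0}.ncard ≤ 1) (h₂ : {i | q₂ i ≠ 0}.ncard ≤ 1)
    (heq : (H.map (fun x => (x.val : ℂ))).mulVec q₁ =
           (H.map (fun x => (x.val : ℂ))).mulVec q₂) :
    q₁ = q₂ := by
  rcases isEmpty_or_nonempty (Fin n) with _ | _
  · exact Subsingleton.elim _ _
  obtain ⟨j₁, c₁, rfl⟩ := Function.exists_eq_single_of_ncard_support_le_one h₁
  obtain ⟨j₂, c₂, rfl⟩ := Function.exists_eq_single_of_ncard_support_le_one h₂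
  set φ : ZMod 2 → ℂ := fun x => (x.val : ℂ)
  have hφ : Function.Injective φ := Nat.cast_injective.comp (ZMod.val_injective 2)
  have hφ0 : φ 0 = 0 := by simp [φ]
  have hφ01 : ∀ x, φ x = 0 ∨ φ x = 1 := by
    intro x
    fin_cases x <;> simp [φ, ZMod.val]
  exact Matrix.single_eq_single_of_mulVec_eq_of_zero_one (fun i j => hφ01 (H i j))
    (hφ.comp_left.comp hinj)
    (fun j hj => hnz j (hφ.comp_left (hj.trans (funext fun _ => hφ0.symm)))) heq
end
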